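/- arXiv:2309.00804 — 5 statements merged into one kernel-verified Lean document; each statement's English description precedes it below -/
import Mathlib

section
/- If ω ∈ A₁(ℕ), then the symmetrized weight ω̃(k) := ω(|k|) belongs to A₁(ℤ) with ‖ω̃‖_{A₁(ℤ)} ≤ 4‖ω‖_{A₁(ℕ)}. -/
open Finset MeasureTheory
open scoped Classical

noncomputable section

/-- The symmetric interval `S_{m,N} = {k : |k - m| ≤ N}` as a finite set. -/
def Sint (m : ℤ) (N : ℕ) : Finset ℤ := Finset.Icc (m - N) (m + N)

/-- `w(S) = Σ_{k ∈ S} w(k)`. -/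
def wSum (w : ℤ → ℝ) (s : Finset ℤ) : ℝ := ∑ k ∈ s, w k

/-- Discrete weighted Morrey norm `‖x‖_{l^p_q(w,v)}`. -/
def morreyNorm (p q : ℝ) (w v : ℤ → ℝ) (x : ℤ → ℝ) : ℝ :=
  ⨆ mN : ℤ × ℕ, (wSum v (Sint mN.1 mN.2)) ^ (1/q - 1/p) *
    (∑ k ∈ Sint mN.1 mN.2, |x k| ^ p * w k) ^ (1/p)

/-!
An interval `[a, b] ⊂ ℤ` is carried by `|·|` into an interval `[p, q] ⊂ ℕ` with at most as many
points, and each `n` has at most the two preimages `±n`. Hence the sum of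
`w(|k|)` over `[a, b]` is at most twice the sum of `w` over `[p, q]`, which the `A₁(ℕ)` bound
controls by `A · #[p, q] · min_{[p, q]} w ≤ A · #[a, b] · min_{[a, b]} w(|·|)`.
-/

def IsA1Bound {α : Type*} [PartialOrder α] [LocallyFiniteOrder α] (w : α → ℝ) (A : ℝ) : Prop :=
  ∀ a b : α, (hab : a ≤ b) →
    ((Icc a b).card : ℝ)⁻¹ * ∑ k ∈ Icc a b, w k ≤ A * (Icc a b).inf' (nonempty_Icc.mpr hab) w

section

variable {α : Type*} [PartialOrder α] [LocallyFiniteOrder α] {w : α → ℝ} {A : ℝ}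

theorem isA1Bound_iff_sum_le :
    IsA1Bound w A ↔ ∀ a b : α, (hab : a ≤ b) →
      ∑ k ∈ Icc a b, w k ≤ #(Icc a b) * (A * (Icc a b).inf' (nonempty_Icc.mpr hab) w) :=
  forall₂_congr fun a b => forall_congr' fun hab =>
    inv_mul_le_iff₀ (by exact_mod_cast (nonempty_Icc.mpr hab).card_pos)

theorem IsA1Bound.one_le (hA : IsA1Bound w A) (a : α) (ha : 0 < w a) : 1 ≤ A := by
  have := hA a a le_rfl
  simp only [Icc_self, card_singleton, Nat.cast_one, inv_one, sum_singleton, one_mul,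
    inf'_singleton] at this
  exact (le_mul_iff_one_le_left ha).1 this

theorem IsA1Bound.mono (hA : IsA1Bound w A) (hw : ∀ k, 0 ≤ w k) {B : ℝ} (hAB : A ≤ B) :
    IsA1Bound w B := fun a b hab =>
  (hA a b hab).trans <| by gcongr; exact le_inf' _ _ fun k _ => hw k

end

theorem sum_natAbs_le_two_mul_sum {f : ℕ → ℝ} (hf : ∀ n, 0 ≤ f n) {s : Finset ℤ} {t : Finset ℕ}
    (hst : ∀ k ∈ s, k.natAbs ∈ t) : ∑ k ∈ s, f k.natAbs ≤ 2 * ∑ n ∈ t, f n := by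
  have hfiber (n : ℕ) : #{k ∈ s | k.natAbs = n} ≤ 2 := by
    refine (card_le_card fun k hk => ?_).trans (card_le_two (a := (n : ℤ)) (b := -n))
    simp only [mem_filter, mem_insert, mem_singleton] at hk ⊢
    omega
  calc ∑ k ∈ s, f k.natAbs = ∑ n ∈ s.image Int.natAbs, #{k ∈ s | k.natAbs = n} • f n := sum_comp _ _
    _ ≤ ∑ n ∈ s.image Int.natAbs, 2 * f n := sum_le_sum fun n _ => by
      rw [nsmul_eq_mul]; gcongr
      · exact hf n
      · exact_mod_cast hfiber n
    _ ≤ ∑ n ∈ t, 2 * f n := sum_le_sum_of_subset_of_nonneg (image_subset_iff.2 hst)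
      fun n _ _ => mul_nonneg zero_le_two (hf n)
    _ = 2 * ∑ n ∈ t, f n := (mul_sum ..).symm

/-- `p` is `|k|` for the point `k` of `[a, b]` nearest to `0`. -/
theorem Int.exists_Icc_natAbs_mem {a b : ℤ} (hab : a ≤ b) :
    ∃ p q : ℕ, p ≤ q ∧ (∀ k ∈ Icc a b, k.natAbs ∈ Icc p q) ∧ #(Icc p q) ≤ #(Icc a b) := by
  refine ⟨(max a (min 0 b)).natAbs, max a.natAbs b.natAbs, by omega, fun k hk => ?_, ?_⟩
  · simp only [mem_Icc] at hk ⊢; omega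
  · rw [Int.card_Icc, Nat.card_Icc]; omega

theorem IsA1Bound.comp_natAbs {w : ℕ → ℝ} (hw : ∀ k, 0 < w k) {A : ℝ} (hA : IsA1Bound w A) :
    IsA1Bound (fun k : ℤ => w k.natAbs) (2 * A) := by
  have hA0 : 0 ≤ A := zero_le_one.trans (hA.one_le 0 (hw 0))
  refine isA1Bound_iff_sum_le.2 fun a b hab => ?_
  obtain ⟨p, q, hpq, hmem, hcard⟩ := Int.exists_Icc_natAbs_mem hab
  have hinf : (Icc p q).inf' (nonempty_Icc.mpr hpq) w ≤
      (Icc a b).inf' (nonempty_Icc.mpr hab) fun k => w k.natAbs :=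
    le_inf' _ _ fun k hk => inf'_le _ (hmem k hk)
  have hinf0 : 0 ≤ (Icc p q).inf' (nonempty_Icc.mpr hpq) w := le_inf' _ _ fun n _ => (hw n).le
  calc ∑ k ∈ Icc a b, w k.natAbs ≤ 2 * ∑ n ∈ Icc p q, w n :=
        sum_natAbs_le_two_mul_sum (fun n => (hw n).le) hmem
    _ ≤ 2 * (#(Icc p q) * (A * (Icc p q).inf' (nonempty_Icc.mpr hpq) w)) :=
        mul_le_mul_of_nonneg_left (isA1Bound_iff_sum_le.1 hA p q hpq) zero_le_two
    _ ≤ 2 * (#(Icc a b) * (A * (Icc a b).inf' (nonempty_Icc.mpr hab) fun k => w k.natAbs)) := by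
        gcongr
    _ = _ := by ring

/-- if `w ∈ A₁(ℕ)` with norm `≤ A`, then `k ↦ w(|k|)` is in `A₁(ℤ)`
with norm `≤ 4A`. -/
theorem stmt7 (w : ℕ → ℝ) (hw : ∀ k, 0 < w k) (A : ℝ)
    (hA : ∀ a b : ℕ, (hab : a ≤ b) →
      ((Finset.Icc a b).card : ℝ)⁻¹ * (∑ k ∈ Finset.Icc a b, w k) ≤
        A * (Finset.Icc a b).inf' (Finset.nonempty_Icc.mpr hab) w) :
    ∀ a b : ℤ, (hab : a ≤ b) →
      ((Finset.Icc a b).card : ℝ)⁻¹ * (∑ k ∈ Finset.Icc a b, w k.natAbs) ≤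
        (4 * A) * (Finset.Icc a b).inf' (Finset.nonempty_Icc.mpr hab)
          (fun k => w k.natAbs) := by
  have hA1 : IsA1Bound w A := hA
  have h2A : IsA1Bound (fun k : ℤ => w k.natAbs) (2 * A) := hA1.comp_natAbs hw
  exact h2A.mono (fun k => (hw _).le) (by linarith [hA1.one_le 0 (hw 0)])
end
end

section
/- Let 1 < p < ∞. If ω ∈ A_p(ℕ), then ω̃(k) := ω(|k|) belongs to A_p(ℤ), with ‖ω̃‖_{A_p(ℤ)} ≤ 4·C_{2,p}·‖ω‖_{A_p(ℕ)}, where C_{2,p} is the constant in (a+b)^{p−1} ≤ C_{2,p}(a^{p−1}+b^{p−1}) when p ≥ 2 (and C_{2,p}=1 for 1<p≤2). -/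
/-! Taking absolute values maps an integer interval `[a, b]` into a natural interval `[c, d]`
that is no longer, and hits every natural number at most twice. Hence both averages in the
`A_p` characteristic at most double, which costs a factor `2 · 2^(p-1) = 2^p`; finally
`2^(p-1) ≤ 2 C_{2,p}` is the defining inequality of `C_{2,p}` at `a = b = 1`. -/

open Finset MeasureTheory
open scoped Classical

noncomputable section

/-- The quantity whose supremum over intervals `s` is `‖v‖_{A_p}`. -/
def muckenhouptChar {α : Type*} (p : ℝ) (s : Finset α) (v : α → ℝ) : ℝ :=
  ((s.card : ℝ)⁻¹ * ∑ k ∈ s, v k) * ((s.card : ℝ)⁻¹ * ∑ k ∈ s, v k ^ (-(p - 1)⁻¹)) ^ (p - 1)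

lemma muckenhouptChar_nonneg {α : Type*} (p : ℝ) (s : Finset α) {v : α → ℝ}
    (hv : ∀ k, 0 ≤ v k) : 0 ≤ muckenhouptChar p s v := by
  unfold muckenhouptChar
  have hsum : 0 ≤ ∑ k ∈ s, v k := sum_nonneg fun k _ => hv k
  have hsum' : 0 ≤ ∑ k ∈ s, v k ^ (-(p - 1)⁻¹) :=
    sum_nonneg fun k _ => Real.rpow_nonneg (hv k) _
  positivity

lemma muckenhouptChar_le_of_sum_le {α β : Type*} {p K : ℝ} (hp : 1 ≤ p) (hK : 0 ≤ K)
    {s : Finset α} {t : Finset β} (ht : t.Nonempty) (hcard : t.card ≤ s.card)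
    {u : α → ℝ} {v : β → ℝ} (hu : ∀ k, 0 ≤ u k) (hv : ∀ j, 0 ≤ v j)
    (hsum : ∑ k ∈ s, u k ≤ K * ∑ j ∈ t, v j)
    (hsum' : ∑ k ∈ s, u k ^ (-(p - 1)⁻¹) ≤ K * ∑ j ∈ t, v j ^ (-(p - 1)⁻¹)) :
    muckenhouptChar p s u ≤ K ^ p * muckenhouptChar p t v := by
  have ht_pos : (0 : ℝ) < t.card := by exact_mod_cast ht.card_pos
  have hinv : (s.card : ℝ)⁻¹ ≤ (t.card : ℝ)⁻¹ := inv_anti₀ ht_pos (by exact_mod_cast hcard)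
  have avg_le {X Y : ℝ} (hY : 0 ≤ Y) (hXY : X ≤ K * Y) :
      (s.card : ℝ)⁻¹ * X ≤ K * ((t.card : ℝ)⁻¹ * Y) :=
    calc (s.card : ℝ)⁻¹ * X ≤ (s.card : ℝ)⁻¹ * (K * Y) := by gcongr
      _ ≤ (t.card : ℝ)⁻¹ * (K * Y) := by gcongr
      _ = K * ((t.card : ℝ)⁻¹ * Y) := by ring
  have hu_sum : 0 ≤ ∑ k ∈ s, u k ^ (-(p - 1)⁻¹) :=
    sum_nonneg fun k _ => Real.rpow_nonneg (hu k) _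
  have hv_sum : 0 ≤ ∑ j ∈ t, v j := sum_nonneg fun j _ => hv j
  have hv_sum' : 0 ≤ ∑ j ∈ t, v j ^ (-(p - 1)⁻¹) :=
    sum_nonneg fun j _ => Real.rpow_nonneg (hv j) _
  unfold muckenhouptChar
  calc _ ≤ (K * ((t.card : ℝ)⁻¹ * ∑ j ∈ t, v j)) *
        (K * ((t.card : ℝ)⁻¹ * ∑ j ∈ t, v j ^ (-(p - 1)⁻¹))) ^ (p - 1) := by
        refine mul_le_mul (avg_le hv_sum hsum)
          (Real.rpow_le_rpow (by positivity) (avg_le hv_sum' hsum') (by linarith))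
          (by positivity) (by positivity)
    _ = K ^ p * (((t.card : ℝ)⁻¹ * ∑ j ∈ t, v j) *
        ((t.card : ℝ)⁻¹ * ∑ j ∈ t, v j ^ (-(p - 1)⁻¹)) ^ (p - 1)) := by
        have hKp : K ^ p = K * K ^ (p - 1) := by
          rw [← Real.rpow_one_add' hK (by linarith), add_sub_cancel]
        rw [Real.mul_rpow hK (by positivity), hKp]
        ring

lemma sum_comp_natAbs_le_two_mul {f : ℕ → ℝ} (hf : ∀ n, 0 ≤ f n) {s : Finset ℤ}
    {t : Finset ℕ} (hst : ∀ k ∈ s, k.natAbs ∈ t) :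
    ∑ k ∈ s, f k.natAbs ≤ 2 * ∑ j ∈ t, f j := by
  rw [← sum_fiberwise_of_maps_to hst, mul_sum]
  refine sum_le_sum fun j _ => ?_
  have hfiber : {k ∈ s | k.natAbs = j} ⊆ {(j : ℤ), -(j : ℤ)} := by
    intro k hk
    simp only [mem_filter, mem_insert, mem_singleton] at hk ⊢
    omega
  calc ∑ k ∈ s with k.natAbs = j, f k.natAbs = #{k ∈ s | k.natAbs = j} * f j := by
        rw [sum_congr rfl fun k hk => congrArg f (mem_filter.mp hk).2, sum_const, nsmul_eq_mul]
    _ ≤ 2 * f j := by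
        gcongr
        · exact hf j
        · exact_mod_cast (card_le_card hfiber).trans card_le_two

lemma exists_Icc_natAbs_mapsTo {a b : ℤ} (hab : a ≤ b) :
    ∃ c d : ℕ, c ≤ d ∧ #(Icc c d) ≤ #(Icc a b) ∧ ∀ k ∈ Icc a b, k.natAbs ∈ Icc c d := by
  refine ⟨(max a (min b 0)).natAbs, max a.natAbs b.natAbs, by omega, ?_, fun k hk => ?_⟩
  · rw [Nat.card_Icc, Int.card_Icc]
    omega
  · simp only [mem_Icc] at hk ⊢
    omega

theorem stmt8_general (p : ℝ) (hp : 1 < p) (w : ℕ → ℝ) (hw : ∀ k, 0 < w k)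
    (C2p : ℝ)
    (hC2 : ∀ a b : ℝ, 0 ≤ a → 0 ≤ b → (a + b) ^ (p-1) ≤ C2p * (a ^ (p-1) + b ^ (p-1)))
    (A : ℝ)
    (hA : ∀ a b : ℕ, a ≤ b →
      (((Finset.Icc a b).card : ℝ)⁻¹ * ∑ k ∈ Finset.Icc a b, w k) *
        (((Finset.Icc a b).card : ℝ)⁻¹ *
          ∑ k ∈ Finset.Icc a b, (w k) ^ (-(p-1)⁻¹)) ^ (p-1) ≤ A) :
    ∀ a b : ℤ, a ≤ b →
      (((Finset.Icc a b).card : ℝ)⁻¹ * ∑ k ∈ Finset.Icc a b, w k.natAbs) *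
        (((Finset.Icc a b).card : ℝ)⁻¹ *
          ∑ k ∈ Finset.Icc a b, (w k.natAbs) ^ (-(p-1)⁻¹)) ^ (p-1) ≤
        4 * C2p * A := by
  intro a b hab
  have hw0 : ∀ k, 0 ≤ w k := fun k => (hw k).le
  have hA0 : 0 ≤ A := (muckenhouptChar_nonneg p _ hw0).trans (hA 0 0 le_rfl)
  have h2p : (2 : ℝ) ^ p ≤ 4 * C2p := by
    have h := hC2 1 1 zero_le_one zero_le_one
    rw [Real.one_rpow, show (1 : ℝ) + 1 = 2 by norm_num] at h
    rw [← add_sub_cancel 1 p, Real.rpow_one_add' zero_le_two (by linarith)]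
    linarith
  obtain ⟨c, d, hcd, hcard, hmaps⟩ := exists_Icc_natAbs_mapsTo hab
  change muckenhouptChar p (Icc a b) (fun k => w k.natAbs) ≤ _
  calc _ ≤ 2 ^ p * muckenhouptChar p (Icc c d) w :=
        muckenhouptChar_le_of_sum_le hp.le zero_le_two (nonempty_Icc.mpr hcd) hcard
          (fun k => hw0 _) hw0 (sum_comp_natAbs_le_two_mul hw0 hmaps)
          (sum_comp_natAbs_le_two_mul (fun n => Real.rpow_nonneg (hw0 n) _) hmaps)
    _ ≤ 2 ^ p * A := by gcongr; exact hA c d hcd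
    _ ≤ 4 * C2p * A := by gcongr

/-- if `w ∈ A_p(ℕ)` with norm `≤ A`, then `k ↦ w(|k|)` is in `A_p(ℤ)`
with norm `≤ 4 C_{2,p} A`, where `C_{2,p}` satisfies `(a+b)^{p-1} ≤ C_{2,p}(a^{p-1}+b^{p-1})`. -/
theorem stmt8 (p : ℝ) (hp : 1 < p) (w : ℕ → ℝ) (hw : ∀ k, 0 < w k)
    (C2p : ℝ) (hC2p : 0 < C2p)
    (hC2 : ∀ a b : ℝ, 0 ≤ a → 0 ≤ b → (a + b) ^ (p-1) ≤ C2p * (a ^ (p-1) + b ^ (p-1)))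
    (A : ℝ)
    (hA : ∀ a b : ℕ, a ≤ b →
      (((Finset.Icc a b).card : ℝ)⁻¹ * ∑ k ∈ Finset.Icc a b, w k) *
        (((Finset.Icc a b).card : ℝ)⁻¹ *
          ∑ k ∈ Finset.Icc a b, (w k) ^ (-(p-1)⁻¹)) ^ (p-1) ≤ A) :
    ∀ a b : ℤ, a ≤ b →
      (((Finset.Icc a b).card : ℝ)⁻¹ * ∑ k ∈ Finset.Icc a b, w k.natAbs) *
        (((Finset.Icc a b).card : ℝ)⁻¹ *
          ∑ k ∈ Finset.Icc a b, (w k.natAbs) ^ (-(p-1)⁻¹)) ^ (p-1) ≤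
        4 * C2p * A :=
  stmt8_general p hp w hw C2p hC2 A hA
end
end

section
/- Calderón–Zygmund decomposition for weighted l¹ sequences: Let 1 ≤ p < ∞, ω ∈ A_p(ℤ), and x ∈ l¹_ω(ℤ). For every t > 0, there exist a constant C depending only on p and ω, and a collection I_t of pairwise disjoint maximal dyadic intervals of ℤ such that (i) t < (1/ω(I)) Σ_{k∈I} |x(k)|ω(k) ≤ Ct for every I ∈ I_t, and (ii) |x(n)| ≤ t for every n not in ∪_{I∈I_t} I. -/
open Finset MeasureTheory
open scoped Classical

noncomputable section

/-- The discrete Muckenhoupt class `A₁(ℤ)`. -/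
def discreteA1 (w : ℤ → ℝ) : Prop :=
  ∃ C : ℝ, ∀ a b : ℤ, (hab : a ≤ b) →
    ((Finset.Icc a b).card : ℝ)⁻¹ * (∑ k ∈ Finset.Icc a b, w k) ≤
      C * (Finset.Icc a b).inf' (Finset.nonempty_Icc.mpr hab) w

/-- The discrete Muckenhoupt class `A_p(ℤ)` for `1 < p < ∞`. -/
def discreteAp (p : ℝ) (w : ℤ → ℝ) : Prop :=
  ∃ C : ℝ, ∀ a b : ℤ, a ≤ b →
    (((Finset.Icc a b).card : ℝ)⁻¹ * ∑ k ∈ Finset.Icc a b, w k) *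
      (((Finset.Icc a b).card : ℝ)⁻¹ *
        ∑ k ∈ Finset.Icc a b, (w k) ^ (-(p-1)⁻¹)) ^ (p-1) ≤ C

/-- The dyadic interval `I_{N,j} = {(j-1)2^N + 1, …, j 2^N}`. -/
def dyadic (N : ℕ) (j : ℤ) : Finset ℤ := Finset.Icc ((j - 1) * 2 ^ N + 1) (j * 2 ^ N)

/-- The weighted average of `|x|` over the dyadic interval `I_{N,j}`. -/
def czAvg (w x : ℤ → ℝ) (N : ℕ) (j : ℤ) : ℝ :=
  (wSum w (dyadic N j))⁻¹ * ∑ k ∈ dyadic N j, |x k| * w k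

namespace CZ

lemma mem_dyadic {N : ℕ} {j n : ℤ} : n ∈ dyadic N j ↔ (j-1)*2^N < n ∧ n ≤ j*2^N := by
  simp [dyadic, Finset.mem_Icc, Int.add_one_le_iff]

def idx (N : ℕ) (n : ℤ) : ℤ := (n-1) / 2^N + 1

lemma idx_mem (N : ℕ) (n : ℤ) : n ∈ dyadic N (idx N n) := by
  have h2 : (0:ℤ) < 2 ^ N := by positivity
  rw [mem_dyadic]
  constructor
  · have h := Int.ediv_mul_le (n-1) (b := 2^N) h2.ne'
    have e : (idx N n - 1) * 2^N = (n-1)/2^N * 2^N := by simp only [idx]; ring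
    rw [e]
    omega
  · have := Int.lt_ediv_add_one_mul_self (n-1) (b := 2^N) h2
    simp only [idx]
    omega

lemma idx_unique {N : ℕ} {j n : ℤ} (h : n ∈ dyadic N j) : j = idx N n := by
  have h2 : (0:ℤ) < 2 ^ N := by positivity
  rw [mem_dyadic] at h
  have h' := (mem_dyadic (j := idx N n)).mp (idx_mem N n)
  rcases lt_trichotomy j (idx N n) with hlt | heq | hgt
  · exfalso
    have : j ≤ idx N n - 1 := by omega
    have : j * 2^N ≤ (idx N n - 1) * 2^N := by
      apply mul_le_mul_of_nonneg_right this h2.le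
    omega
  · exact heq
  · exfalso
    have : idx N n ≤ j - 1 := by omega
    have : idx N n * 2^N ≤ (j - 1) * 2^N := by
      apply mul_le_mul_of_nonneg_right this h2.le
    omega

lemma mem_self (N : ℕ) (j : ℤ) : j * 2^N ∈ dyadic N j := by
  rw [mem_dyadic]
  have h2 : (0:ℤ) < 2 ^ N := by positivity
  constructor
  · nlinarith
  · exact le_refl _

lemma dyadic_subset {N M : ℕ} (hNM : N ≤ M) (n : ℤ) :
    dyadic N (idx N n) ⊆ dyadic M (idx M n) := by
  have h2 : (0:ℤ) < 2 ^ N := by positivity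
  set j := idx N n
  set j' := idx M n
  have hj := (mem_dyadic (j := j)).mp (idx_mem N n)
  have hj' := (mem_dyadic (j := j')).mp (idx_mem M n)
  have hMe : (2:ℤ)^M = 2^(M-N) * 2^N := by
    rw [← pow_add]; congr 1; omega
  have h1 : j * 2^N ≤ j' * 2^M := by
    have : (j - 1) * 2^N < j' * (2^(M-N) * 2^N) := by rw [← hMe]; omega
    have h3 : j - 1 < j' * 2^(M-N) := by
      rw [← mul_assoc] at this
      exact lt_of_mul_lt_mul_right (by linarith) h2.le
    have : j ≤ j' * 2^(M-N) := by omega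
    calc j * 2^N ≤ j' * 2^(M-N) * 2^N := mul_le_mul_of_nonneg_right this h2.le
      _ = j' * 2^M := by rw [hMe, mul_assoc]
  have h4 : (j' - 1) * 2^M ≤ (j - 1) * 2^N := by
    have : (j' - 1) * (2^(M-N) * 2^N) < j * 2^N := by rw [← hMe]; omega
    have h3 : (j' - 1) * 2^(M-N) < j := by
      rw [← mul_assoc] at this
      exact lt_of_mul_lt_mul_right this h2.le
    have : (j' - 1) * 2^(M-N) ≤ j - 1 := by omega
    calc (j' - 1) * 2^M = (j' - 1) * 2^(M-N) * 2^N := by rw [hMe, mul_assoc]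
      _ ≤ (j - 1) * 2^N := mul_le_mul_of_nonneg_right this h2.le
  intro m hm
  rw [mem_dyadic] at hm ⊢
  omega

lemma idx_eq_of_mem {N M : ℕ} (hNM : N ≤ M) {n m : ℤ} (hm : m ∈ dyadic N (idx N n)) :
    idx M m = idx M n := by
  have : m ∈ dyadic M (idx M n) := dyadic_subset hNM n hm
  exact (idx_unique this).symm

lemma card_dyadic (N : ℕ) (j : ℤ) : (dyadic N j).card = 2 ^ N := by
  rw [dyadic, Int.card_Icc]
  have : j * 2^N + 1 - ((j-1) * 2^N + 1) = ((2^N : ℕ) : ℤ) := by push_cast; ring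
  rw [this, Int.toNat_natCast]

end CZ

namespace CZ

lemma key (p : ℝ) (hp : 1 ≤ p) (w : ℤ → ℝ) (hw : ∀ k, 0 < w k)
    (hAp : (p = 1 ∧ discreteA1 w) ∨ (1 < p ∧ discreteAp p w)) :
    ∃ c : ℝ, 1 ≤ c ∧ ∀ a b : ℤ, a ≤ b → ∀ E ⊆ Finset.Icc a b,
      (E.card : ℝ) ^ p * wSum w (Finset.Icc a b) ≤
        c * ((Finset.Icc a b).card : ℝ) ^ p * wSum w E := by
  rcases hAp with ⟨hp1, C, hC⟩ | ⟨hp1, C, hC⟩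
  · subst hp1
    -- A1 case
    have hC1 : 1 ≤ C := by
      have h0 := hC 0 0 le_rfl
      simp only [Finset.Icc_self, Finset.card_singleton, Nat.cast_one, inv_one, one_mul,
        Finset.sum_singleton, Finset.inf'_singleton] at h0
      nlinarith [hw 0]
    refine ⟨C, hC1, fun a b hab E hE => ?_⟩
    have hne : (Finset.Icc a b).Nonempty := Finset.nonempty_Icc.mpr hab
    set inf := (Finset.Icc a b).inf' hne w with hinf
    obtain ⟨k0, hk0, hk0e⟩ := Finset.exists_mem_eq_inf' hne w
    have hinfpos : 0 < inf := by rw [hinf, hk0e]; exact hw k0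
    have hn : (0:ℝ) < ((Finset.Icc a b).card : ℝ) := by
      exact_mod_cast Finset.card_pos.mpr hne
    have hSig : wSum w (Finset.Icc a b) ≤ C * ((Finset.Icc a b).card : ℝ) * inf := by
      have h1 := hC a b hab
      rw [inv_mul_le_iff₀ hn] at h1
      calc wSum w (Finset.Icc a b) = ∑ k ∈ Finset.Icc a b, w k := rfl
        _ ≤ ((Finset.Icc a b).card : ℝ) * (C * inf) := h1
        _ = C * ((Finset.Icc a b).card : ℝ) * inf := by ring
    have hE2 : (E.card : ℝ) * inf ≤ wSum w E := by
      have := Finset.card_nsmul_le_sum E w inf (fun k hk => Finset.inf'_le w (hE hk))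
      simpa [nsmul_eq_mul, wSum] using this
    simp only [Real.rpow_one]
    calc (E.card : ℝ) * wSum w (Finset.Icc a b)
        ≤ (E.card : ℝ) * (C * ((Finset.Icc a b).card : ℝ) * inf) :=
          mul_le_mul_of_nonneg_left hSig (by positivity)
      _ = C * ((Finset.Icc a b).card : ℝ) * ((E.card : ℝ) * inf) := by ring
      _ ≤ C * ((Finset.Icc a b).card : ℝ) * wSum w E :=
          mul_le_mul_of_nonneg_left hE2 (by positivity)
  · -- Ap case
    have hppos : (0:ℝ) < p := by linarith
    have hps : p - 1 ≠ 0 := by intro h; rw [sub_eq_zero] at h; linarith [hp1]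
    have hpsnn : (0:ℝ) ≤ p - 1 := by linarith
    have hC1 : 1 ≤ C := by
      have h0 := hC 0 0 le_rfl
      simp only [Finset.Icc_self, Finset.card_singleton, Nat.cast_one, inv_one, one_mul,
        Finset.sum_singleton] at h0
      rw [← Real.rpow_mul (hw 0).le] at h0
      have he : -(p-1)⁻¹ * (p-1) = -1 := by field_simp
      rw [he, Real.rpow_neg_one, mul_inv_cancel₀ (hw 0).ne'] at h0
      exact h0
    have hq : Real.HolderConjugate p (p/(p-1)) :=
      (Real.holderConjugate_iff_eq_conjExponent hp1).mpr rfl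
    refine ⟨C, hC1, fun a b hab E hE => ?_⟩
    set P := Finset.Icc a b with hP
    have hne : P.Nonempty := Finset.nonempty_Icc.mpr hab
    have hn : (0:ℝ) < (P.card : ℝ) := by exact_mod_cast Finset.card_pos.mpr hne
    set σ : ℤ → ℝ := fun k => w k ^ (-(p-1)⁻¹) with hσdef
    have hσpos : ∀ k, 0 < σ k := fun k => Real.rpow_pos_of_pos (hw k) _
    -- Hölder on E
    have h1 : (E.card : ℝ) = ∑ k ∈ E, (w k ^ (1/p)) * (w k ^ (-(1/p))) := by
      have : ∀ k ∈ E, (w k ^ (1/p)) * (w k ^ (-(1/p))) = 1 := by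
        intro k _
        rw [← Real.rpow_add (hw k)]
        simp
      rw [Finset.sum_congr rfl this]
      simp
    have h2 := Real.inner_le_Lp_mul_Lq_of_nonneg (s := E) hq
      (f := fun k => w k ^ (1/p)) (g := fun k => w k ^ (-(1/p)))
      (fun i _ => (Real.rpow_pos_of_pos (hw i) _).le)
      (fun i _ => (Real.rpow_pos_of_pos (hw i) _).le)
    have hfp : ∀ k ∈ E, (w k ^ (1/p)) ^ p = w k := by
      intro k _
      rw [← Real.rpow_mul (hw k).le, one_div, inv_mul_cancel₀ hppos.ne', Real.rpow_one]
    have hgq : ∀ k ∈ E, (w k ^ (-(1/p))) ^ (p/(p-1)) = σ k := by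
      intro k _
      rw [← Real.rpow_mul (hw k).le, hσdef]
      congr 1
      field_simp
    rw [Finset.sum_congr rfl hfp, Finset.sum_congr rfl hgq, ← h1] at h2
    -- raise to power p
    have h3 : (E.card : ℝ) ^ p ≤ wSum w E * (∑ k ∈ E, σ k) ^ (p-1) := by
      have hEnn : (0:ℝ) ≤ wSum w E := Finset.sum_nonneg fun k _ => (hw k).le
      have hσEnn : (0:ℝ) ≤ ∑ k ∈ E, σ k := Finset.sum_nonneg fun k _ => (hσpos k).le
      have := Real.rpow_le_rpow (Nat.cast_nonneg _) h2 hppos.le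
      calc (E.card : ℝ) ^ p ≤ ((wSum w E ^ (1/p)) * ((∑ k ∈ E, σ k) ^ (1/(p/(p-1))))) ^ p := this
        _ = wSum w E * (∑ k ∈ E, σ k) ^ (p-1) := by
            rw [Real.mul_rpow (Real.rpow_nonneg hEnn _) (Real.rpow_nonneg hσEnn _),
              ← Real.rpow_mul hEnn, ← Real.rpow_mul hσEnn]
            have e1 : (1/p)*p = 1 := by field_simp
            have e2 : (1/(p/(p-1)))*p = p-1 := by field_simp
            rw [e1, e2, Real.rpow_one]
    -- enlarge σ-sum to P
    have hσmono : (∑ k ∈ E, σ k) ^ (p-1) ≤ (∑ k ∈ P, σ k) ^ (p-1) := by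
      apply Real.rpow_le_rpow (Finset.sum_nonneg fun k _ => (hσpos k).le) _ hpsnn
      exact Finset.sum_le_sum_of_subset_of_nonneg hE (fun k _ _ => (hσpos k).le)
    -- Ap bound on P
    have hPw : 0 < wSum w P := Finset.sum_pos (fun k _ => hw k) hne
    have hA : wSum w P * (∑ k ∈ P, σ k) ^ (p-1) ≤ C * ((P.card : ℝ) * (P.card : ℝ) ^ (p-1)) := by
      have h := hC a b hab
      rw [Real.mul_rpow (by positivity) (Finset.sum_nonneg fun k _ => (hσpos k).le),
        Real.inv_rpow hn.le] at h
      have hpow : (0:ℝ) < (P.card : ℝ) ^ (p-1) := Real.rpow_pos_of_pos hn _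
      have expand : wSum w P * (∑ k ∈ P, σ k) ^ (p-1) =
          ((P.card : ℝ) * (P.card : ℝ) ^ (p-1)) *
            (((P.card : ℝ))⁻¹ * wSum w P * ((((P.card : ℝ)) ^ (p-1))⁻¹ * (∑ k ∈ P, σ k) ^ (p-1))) := by
        field_simp
      rw [expand]
      calc ((P.card : ℝ) * (P.card : ℝ) ^ (p-1)) *
            (((P.card : ℝ))⁻¹ * wSum w P * ((((P.card : ℝ)) ^ (p-1))⁻¹ * (∑ k ∈ P, σ k) ^ (p-1)))
          ≤ ((P.card : ℝ) * (P.card : ℝ) ^ (p-1)) * C := by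
            apply mul_le_mul_of_nonneg_left _ (by positivity)
            exact h
        _ = C * ((P.card : ℝ) * (P.card : ℝ) ^ (p-1)) := by ring
    have hcard : (P.card : ℝ) * (P.card : ℝ) ^ (p-1) = (P.card : ℝ) ^ p := by
      nth_rewrite 1 [← Real.rpow_one (P.card : ℝ)]
      rw [← Real.rpow_add hn]
      norm_num
    -- combine
    have hEnn : (0:ℝ) ≤ wSum w E := Finset.sum_nonneg fun k _ => (hw k).le
    calc (E.card : ℝ) ^ p * wSum w P
        ≤ (wSum w E * (∑ k ∈ P, σ k) ^ (p-1)) * wSum w P := by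
          apply mul_le_mul_of_nonneg_right _ hPw.le
          exact h3.trans (mul_le_mul_of_nonneg_left hσmono hEnn)
      _ = wSum w E * (wSum w P * (∑ k ∈ P, σ k) ^ (p-1)) := by ring
      _ ≤ wSum w E * (C * ((P.card : ℝ) * (P.card : ℝ) ^ (p-1))) :=
          mul_le_mul_of_nonneg_left hA hEnn
      _ = C * ((P.card : ℝ) * (P.card : ℝ) ^ (p-1)) * wSum w E := by ring
      _ = C * (P.card : ℝ) ^ p * wSum w E := by rw [hcard, mul_assoc]

end CZ

/-- Calderón–Zygmund decomposition for weighted `l¹` sequences. -/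
theorem stmt10 (p : ℝ) (hp : 1 ≤ p) (w : ℤ → ℝ) (hw : ∀ k, 0 < w k)
    (hAp : (p = 1 ∧ discreteA1 w) ∨ (1 < p ∧ discreteAp p w))
    (x : ℤ → ℝ) (hx : Summable fun k : ℤ => |x k| * w k) :
    ∃ C > 0, ∀ t : ℝ, 0 < t →
      ∃ 𝒥 : Set (ℕ × ℤ),
        (∀ i ∈ 𝒥, ∀ j ∈ 𝒥, i ≠ j → Disjoint (dyadic i.1 i.2) (dyadic j.1 j.2)) ∧
        (∀ i ∈ 𝒥, t < czAvg w x i.1 i.2 ∧ czAvg w x i.1 i.2 ≤ C * t) ∧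
        (∀ n : ℤ, (∀ i ∈ 𝒥, n ∉ dyadic i.1 i.2) → |x n| ≤ t) := by
  classical
  obtain ⟨c, hc1, hkey⟩ := CZ.key p hp w hw hAp
  open CZ in
  set K := c * (2:ℝ)^p with hKdef
  have h2pos : (0:ℝ) < (2:ℝ)^p := Real.rpow_pos_of_pos (by norm_num) p
  have h2p : (2:ℝ) ≤ (2:ℝ)^p := by
    nth_rewrite 1 [← Real.rpow_one 2]
    exact Real.rpow_le_rpow_of_exponent_le (by norm_num) hp
  have hK2 : 2 ≤ K := by nlinarith
  have hK0 : 0 < K := by linarith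
  have hwpos : ∀ (N : ℕ) (j : ℤ), 0 < wSum w (dyadic N j) :=
    fun N j => Finset.sum_pos (fun k _ => hw k) ⟨j*2^N, CZ.mem_self N j⟩
  have hdouble : ∀ (N : ℕ) (j : ℤ) (E : Finset ℤ), E ⊆ dyadic (N+1) j → E.card = 2^N →
      wSum w (dyadic (N+1) j) ≤ K * wSum w E := by
    intro N j E hE hcard
    have h2NZ : (0:ℤ) < 2^(N+1) := by positivity
    have hab : (j-1)*2^(N+1)+1 ≤ j*2^(N+1) := by nlinarith
    have h := hkey ((j-1)*2^(N+1)+1) (j*2^(N+1)) hab E hE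
    have hc2 : ((Finset.Icc ((j-1)*2^(N+1)+1) (j*2^(N+1))).card : ℝ) = 2*(2:ℝ)^N := by
      rw [show Finset.Icc ((j-1)*2^(N+1)+1) (j*2^(N+1)) = dyadic (N+1) j from rfl,
        CZ.card_dyadic]
      push_cast
      ring
    have hcE : (E.card : ℝ) = (2:ℝ)^N := by rw [hcard]; push_cast; ring
    rw [hcE, hc2, Real.mul_rpow (by norm_num) (by positivity)] at h
    have hpow : (0:ℝ) < ((2:ℝ)^N)^p := Real.rpow_pos_of_pos (by positivity) _
    have h' : ((2:ℝ)^N)^p * wSum w (dyadic (N+1) j) ≤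
        ((2:ℝ)^N)^p * (K * wSum w E) := by
      have hrearr : c * ((2:ℝ)^p * ((2:ℝ)^N)^p) * wSum w E =
          ((2:ℝ)^N)^p * (K * wSum w E) := by rw [hKdef]; ring
      calc ((2:ℝ)^N)^p * wSum w (dyadic (N+1) j)
          ≤ c * ((2:ℝ)^p * ((2:ℝ)^N)^p) * wSum w E := h
        _ = ((2:ℝ)^N)^p * (K * wSum w E) := hrearr
    exact le_of_mul_le_mul_left h' hpow
  have hstep : ∀ (n : ℤ) (M : ℕ), K * wSum w (dyadic M (CZ.idx M n)) ≤
      (K - 1) * wSum w (dyadic (M+1) (CZ.idx (M+1) n)) := by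
    intro n M
    have hsub : dyadic M (CZ.idx M n) ⊆ dyadic (M+1) (CZ.idx (M+1) n) :=
      CZ.dyadic_subset (Nat.le_succ M) n
    have hD : wSum w (dyadic (M+1) (CZ.idx (M+1) n) \ dyadic M (CZ.idx M n)) =
        wSum w (dyadic (M+1) (CZ.idx (M+1) n)) - wSum w (dyadic M (CZ.idx M n)) := by
      have := Finset.sum_sdiff (f := w) hsub
      unfold wSum
      linarith
    have hcard : (dyadic (M+1) (CZ.idx (M+1) n) \ dyadic M (CZ.idx M n)).card = 2^M := by
      rw [Finset.card_sdiff_of_subset hsub, CZ.card_dyadic, CZ.card_dyadic, pow_succ]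
      omega
    have hdb := hdouble M (CZ.idx (M+1) n) _ Finset.sdiff_subset hcard
    rw [hD] at hdb
    have hexp : K * (wSum w (dyadic (M+1) (CZ.idx (M+1) n)) - wSum w (dyadic M (CZ.idx M n))) =
        K * wSum w (dyadic (M+1) (CZ.idx (M+1) n)) - K * wSum w (dyadic M (CZ.idx M n)) := by
      ring
    rw [hexp] at hdb
    linarith
  have hr : 1 < K/(K-1) := by
    rw [lt_div_iff₀ (by linarith)]
    linarith
  have hdy0 : ∀ n : ℤ, dyadic 0 (CZ.idx 0 n) = {n} := by
    intro n
    have h1 := CZ.mem_dyadic.mp (CZ.idx_mem 0 n)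
    simp only [pow_zero, mul_one] at h1
    ext m
    rw [CZ.mem_dyadic]
    simp only [pow_zero, mul_one, Finset.mem_singleton]
    omega
  have hgrow : ∀ (n : ℤ) (M : ℕ), (K/(K-1))^M * w n ≤ wSum w (dyadic M (CZ.idx M n)) := by
    intro n M
    induction M with
    | zero =>
      rw [hdy0 n]
      simp [wSum]
    | succ M ih =>
      have hKm : (0:ℝ) < K - 1 := by linarith
      calc (K/(K-1))^(M+1) * w n = (K/(K-1)) * ((K/(K-1))^M * w n) := by ring
        _ ≤ (K/(K-1)) * wSum w (dyadic M (CZ.idx M n)) :=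
            mul_le_mul_of_nonneg_left ih (by positivity)
        _ ≤ wSum w (dyadic (M+1) (CZ.idx (M+1) n)) := by
            rw [div_mul_eq_mul_div, div_le_iff₀ hKm]
            have := hstep n M
            linarith
  refine ⟨K, hK0, fun t ht => ?_⟩
  set S := ∑' k, |x k| * w k with hSdef
  have hSnn : 0 ≤ S := tsum_nonneg fun k => mul_nonneg (abs_nonneg _) (hw k).le
  have hbound : ∀ (N : ℕ) (j : ℤ), czAvg w x N j ≤ S / wSum w (dyadic N j) := by
    intro N j
    rw [czAvg, div_eq_inv_mul]
    apply mul_le_mul_of_nonneg_left _ (inv_nonneg.mpr (hwpos N j).le)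
    exact Summable.sum_le_tsum _ (fun k _ => mul_nonneg (abs_nonneg _) (hw k).le) hx
  have hev : ∀ n : ℤ, ∃ B : ℕ, ∀ M, B ≤ M → czAvg w x M (CZ.idx M n) ≤ t := by
    intro n
    have htend : Filter.Tendsto (fun M : ℕ => (K/(K-1))^M * w n) Filter.atTop Filter.atTop :=
      (tendsto_pow_atTop_atTop_of_one_lt hr).atTop_mul_const (hw n)
    obtain ⟨B, hB⟩ := Filter.eventually_atTop.mp (htend.eventually_gt_atTop (S / t))
    refine ⟨B, fun M hM => ?_⟩
    have h1 : S / t < wSum w (dyadic M (CZ.idx M n)) := lt_of_lt_of_le (hB M hM) (hgrow n M)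
    have h2 : S / wSum w (dyadic M (CZ.idx M n)) ≤ t := by
      rw [div_le_iff₀ (hwpos M _)]
      have := mul_lt_mul_of_pos_left h1 ht
      rw [mul_div_cancel₀ _ ht.ne'] at this
      linarith
    exact (hbound M (CZ.idx M n)).trans h2
  set J : Set (ℕ × ℤ) := {q : ℕ × ℤ | t < czAvg w x q.1 q.2 ∧
    ∀ M, q.1 < M → czAvg w x M (CZ.idx M (q.2 * 2^q.1)) ≤ t} with hJdef
  have hmax : ∀ n : ℤ, t < czAvg w x 0 (CZ.idx 0 n) →
      ∃ q : ℕ × ℤ, q ∈ J ∧ n ∈ dyadic q.1 q.2 := by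
    intro n hn
    obtain ⟨B, hB⟩ := hev n
    set P : ℕ → Prop := fun M => t < czAvg w x M (CZ.idx M n) with hPdef
    have hP0 : P 0 := hn
    set M0 := Nat.findGreatest P B with hM0
    have hPM0 : P M0 := Nat.findGreatest_spec (Nat.zero_le B) hP0
    have hgt : ∀ M, M0 < M → ¬ P M := by
      intro M hM
      by_cases hMB : M ≤ B
      · exact Nat.findGreatest_is_greatest hM hMB
      · push_neg at hMB
        exact fun hPM => absurd (hB M (by omega)) (not_le.mpr hPM)
    refine ⟨(M0, CZ.idx M0 n), ⟨hPM0, ?_⟩, CZ.idx_mem M0 n⟩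
    intro M hM
    have he : CZ.idx M (CZ.idx M0 n * 2^M0) = CZ.idx M n :=
      CZ.idx_eq_of_mem (le_of_lt hM) (CZ.mem_self M0 (CZ.idx M0 n))
    rw [he]
    exact not_lt.mp (hgt M hM)
  refine ⟨J, ?_, ?_, ?_⟩
  · -- disjointness
    intro i hi j hj hij
    by_contra hdis
    obtain ⟨n, hn1, hn2⟩ := Finset.not_disjoint_iff.mp hdis
    have hi2 : i.2 = CZ.idx i.1 n := CZ.idx_unique hn1
    have hj2 : j.2 = CZ.idx j.1 n := CZ.idx_unique hn2
    have key2 : ∀ a b : ℕ × ℤ, a ∈ J → b ∈ J → a.2 = CZ.idx a.1 n → b.2 = CZ.idx b.1 n →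
        a.1 < b.1 → False := by
      intro a b ha hb ha2 hb2 hab
      have hle := ha.2 b.1 hab
      have he : CZ.idx b.1 (a.2 * 2^a.1) = b.2 := by
        rw [ha2, hb2]
        exact CZ.idx_eq_of_mem hab.le (CZ.mem_self a.1 (CZ.idx a.1 n))
      rw [he] at hle
      exact absurd hb.1 (not_lt.mpr hle)
    rcases lt_trichotomy i.1 j.1 with h | h | h
    · exact key2 i j hi hj hi2 hj2 h
    · exact hij (Prod.ext h (by rw [hi2, hj2, h]))
    · exact key2 j i hj hi hj2 hi2 h
  · -- bounds
    intro i hi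
    refine ⟨hi.1, ?_⟩
    obtain ⟨N, j⟩ := i
    simp only at hi ⊢
    have hjidx : j = CZ.idx N (j * 2^N) := CZ.idx_unique (CZ.mem_self N j)
    have hpar : dyadic N j ⊆ dyadic (N+1) (CZ.idx (N+1) (j*2^N)) := by
      nth_rewrite 1 [hjidx]
      exact CZ.dyadic_subset (Nat.le_succ N) (j*2^N)
    have hparle : czAvg w x (N+1) (CZ.idx (N+1) (j*2^N)) ≤ t := hi.2 (N+1) (Nat.lt_succ_self N)
    have hdb : wSum w (dyadic (N+1) (CZ.idx (N+1) (j*2^N))) ≤ K * wSum w (dyadic N j) :=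
      hdouble N _ (dyadic N j) hpar (CZ.card_dyadic N j)
    rw [czAvg, inv_mul_le_iff₀ (hwpos N j)]
    have h1 : ∑ k ∈ dyadic N j, |x k| * w k ≤
        ∑ k ∈ dyadic (N+1) (CZ.idx (N+1) (j*2^N)), |x k| * w k :=
      Finset.sum_le_sum_of_subset_of_nonneg hpar
        (fun k _ _ => mul_nonneg (abs_nonneg _) (hw k).le)
    have h2 : ∑ k ∈ dyadic (N+1) (CZ.idx (N+1) (j*2^N)), |x k| * w k ≤
        t * wSum w (dyadic (N+1) (CZ.idx (N+1) (j*2^N))) := by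
      have hP := hwpos (N+1) (CZ.idx (N+1) (j*2^N))
      rw [czAvg, inv_mul_le_iff₀ hP] at hparle
      linarith [hparle]
    have h3 : t * wSum w (dyadic (N+1) (CZ.idx (N+1) (j*2^N))) ≤
        t * (K * wSum w (dyadic N j)) := mul_le_mul_of_nonneg_left hdb ht.le
    calc ∑ k ∈ dyadic N j, |x k| * w k ≤ t * (K * wSum w (dyadic N j)) := by linarith
      _ = wSum w (dyadic N j) * (K * t) := by ring
  · -- points outside
    intro n hn
    by_contra habs
    push_neg at habs
    have h0 : t < czAvg w x 0 (CZ.idx 0 n) := by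
      rw [czAvg, hdy0 n]
      have hwn : wSum w {n} = w n := by simp [wSum]
      rw [hwn]
      have : (w n)⁻¹ * ∑ k ∈ ({n} : Finset ℤ), |x k| * w k = |x n| := by
        rw [Finset.sum_singleton, mul_comm ((w n)⁻¹), mul_assoc,
          mul_inv_cancel₀ (hw n).ne', mul_one]
      rw [this]
      exact habs
    obtain ⟨q, hq, hnq⟩ := hmax n h0
    exact hn q hq hnq
end
end

section
/- Weak (1,1) bound for the discrete weighted maximal operator: If ω ∈ A₁(ℤ) and x ∈ l¹_ω(ℤ), then for every t > 0, ω({k ∈ ℤ : M_ω x(k) > t}) ≤ (C/t) Σ_{k∈ℤ} |x(k)| ω(k), where C depends only on ω. -/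
open Finset MeasureTheory
open scoped Classical

noncomputable section

/-- The discrete weighted Hardy–Littlewood maximal operator `M_w`. -/
def maxW (w x : ℤ → ℝ) (m : ℤ) : ℝ :=
  ⨆ N : ℕ, (wSum w (Sint m N))⁻¹ * ∑ k ∈ Sint m N, |x k| * w k

/-- The discrete (unweighted) Hardy–Littlewood maximal operator `M`. -/
def maxHL (x : ℤ → ℝ) (m : ℤ) : ℝ :=
  ⨆ N : ℕ, ((2 * N + 1 : ℕ) : ℝ)⁻¹ * ∑ k ∈ Sint m N, |x k|

/-!
Every point `m` of the level set `{M_w x > t}` carries a radius `N m` with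
`t · w(S_{m,N m}) < Σ_{S_{m,N m}} |x| w`. By the Vitali covering lemma, a finite part of the level
set is covered by the fourfold enlargements of a disjoint subfamily of these intervals, and the
`A₁` condition makes `w` doubling: `w(S_{g,4N}) ≤ 4C · w(S_{g,N})`. Summing over the disjoint
subfamily bounds the weight of any finite part of the level set by `(4C/t) Σ |x| w`.
-/

def DiscreteA1Bound (w : ℤ → ℝ) (C : ℝ) : Prop :=
  ∀ a b : ℤ, (hab : a ≤ b) →
    ((Finset.Icc a b).card : ℝ)⁻¹ * (∑ k ∈ Finset.Icc a b, w k) ≤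
      C * (Finset.Icc a b).inf' (Finset.nonempty_Icc.mpr hab) w

theorem Finset.sum_biUnion_le_sum_sum {ι α M : Type*} [DecidableEq α] [AddCommMonoid M]
    [PartialOrder M] [IsOrderedAddMonoid M] {f : α → M} (hf : ∀ a, 0 ≤ f a)
    (s : Finset ι) (t : ι → Finset α) :
    ∑ a ∈ s.biUnion t, f a ≤ ∑ i ∈ s, ∑ a ∈ t i, f a := by
  rw [← Finset.sup_eq_biUnion]
  refine Finset.apply_sup_le_sum (f := fun u : Finset α => ∑ a ∈ u, f a) rfl (fun {u v} => ?_) s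
  rw [← Finset.sum_union_inter]
  exact le_add_of_nonneg_right (Finset.sum_nonneg fun a _ => hf a)

lemma card_Sint (m : ℤ) (N : ℕ) : (Sint m N).card = 2 * N + 1 := by
  rw [Sint, Int.card_Icc]
  omega

lemma coe_Sint (m : ℤ) (N : ℕ) : (Sint m N : Set ℤ) = Metric.closedBall m N := by
  rw [Int.closedBall_eq_Icc, Sint, Finset.coe_Icc]
  norm_cast
  simp

lemma Sint_subset_Sint {m : ℤ} {N N' : ℕ} (h : N ≤ N') : Sint m N ⊆ Sint m N' :=
  Finset.Icc_subset_Icc (by omega) (by omega)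

lemma wSum_Sint_pos {w : ℤ → ℝ} (hw : ∀ k, 0 < w k) (m : ℤ) (N : ℕ) :
    0 < wSum w (Sint m N) :=
  Finset.sum_pos (fun k _ => hw k) (Finset.nonempty_Icc.mpr (by omega))

lemma exists_lt_sum_of_lt_maxW {w x : ℤ → ℝ} (hw : ∀ k, 0 < w k) {m : ℤ} {t : ℝ}
    (h : t < maxW w x m) : ∃ N : ℕ, t * wSum w (Sint m N) < ∑ k ∈ Sint m N, |x k| * w k := by
  obtain ⟨N, hN⟩ := exists_lt_of_lt_ciSup h
  exact ⟨N, by rwa [lt_inv_mul_iff₀ (wSum_Sint_pos hw m N), mul_comm] at hN⟩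

lemma exists_pairwiseDisjoint_Sint_subset_biUnion (F : Finset ℤ) (N : ℤ → ℕ) :
    ∃ G ⊆ F, (G : Set ℤ).PairwiseDisjoint (fun g => Sint g (N g)) ∧
      F ⊆ G.biUnion fun g => Sint g (4 * N g) := by
  obtain ⟨u, huF, hdisj, hcover⟩ :=
    Vitali.exists_disjoint_subfamily_covering_enlargement_closedBall (F : Set ℤ) id
      (fun m => (N m : ℝ)) (F.sup N : ℕ) (fun m hm => by exact_mod_cast Finset.le_sup hm) 4
      (by norm_num)
  have hu : u.Finite := F.finite_toSet.subset huF
  refine ⟨hu.toFinset, by simpa using huF, ?_, fun m hm => ?_⟩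
  · intro a ha b hb hab
    rw [Function.onFun, ← Finset.disjoint_coe, coe_Sint, coe_Sint]
    exact hdisj (by simpa using ha) (by simpa using hb) hab
  · obtain ⟨g, hg, hsub⟩ := hcover m hm
    refine Finset.mem_biUnion.mpr ⟨g, by simpa using hg, ?_⟩
    rw [← Finset.mem_coe, coe_Sint]
    push_cast
    exact hsub (Metric.mem_closedBall_self (Nat.cast_nonneg _))

namespace DiscreteA1Bound

variable {w : ℤ → ℝ} {C : ℝ}

lemma one_le (hC : DiscreteA1Bound w C) {a : ℤ} (ha : 0 < w a) : 1 ≤ C := by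
  have h := hC a a le_rfl
  simp only [Finset.Icc_self, Finset.card_singleton, Nat.cast_one, inv_one,
    Finset.sum_singleton, Finset.inf'_singleton, one_mul] at h
  nlinarith

lemma card_mul_sum_Icc_le (hC : DiscreteA1Bound w C) (hC0 : 0 ≤ C) {a b : ℤ} (hab : a ≤ b)
    {s : Finset ℤ} (hs : s ⊆ Finset.Icc a b) :
    (s.card : ℝ) * ∑ k ∈ Finset.Icc a b, w k ≤ C * (Finset.Icc a b).card * ∑ k ∈ s, w k := by
  set I := (Finset.Icc a b).inf' (Finset.nonempty_Icc.mpr hab) w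
  have hcard : (0 : ℝ) < (Finset.Icc a b).card := by
    exact_mod_cast (Finset.nonempty_Icc.mpr hab).card_pos
  have hIcc : ∑ k ∈ Finset.Icc a b, w k ≤ (Finset.Icc a b).card * (C * I) :=
    (inv_mul_le_iff₀ hcard).mp (hC a b hab)
  have hs : (s.card : ℝ) * I ≤ ∑ k ∈ s, w k := by
    simpa using Finset.card_nsmul_le_sum s w I fun k hk => Finset.inf'_le w (hs hk)
  calc (s.card : ℝ) * ∑ k ∈ Finset.Icc a b, w k
      ≤ s.card * ((Finset.Icc a b).card * (C * I)) := by gcongr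
    _ = C * (Finset.Icc a b).card * (s.card * I) := by ring
    _ ≤ C * (Finset.Icc a b).card * ∑ k ∈ s, w k := by gcongr

lemma wSum_Sint_mul_le (hC : DiscreteA1Bound w C) (hC0 : 0 ≤ C) (hw : ∀ k, 0 ≤ w k)
    {n : ℕ} (hn : 1 ≤ n) (m : ℤ) (N : ℕ) :
    wSum w (Sint m (n * N)) ≤ n * C * wSum w (Sint m N) := by
  have hsub : Sint m N ⊆ Sint m (n * N) := Sint_subset_Sint (Nat.le_mul_of_pos_left N hn)
  have h := hC.card_mul_sum_Icc_le hC0 (a := m - (n * N : ℕ)) (b := m + (n * N : ℕ))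
    (by omega) hsub
  rw [← Sint, card_Sint, card_Sint] at h
  have hS : 0 ≤ wSum w (Sint m N) := Finset.sum_nonneg fun k _ => hw k
  have hcard : ((2 * (n * N) + 1 : ℕ) : ℝ) ≤ n * (2 * N + 1) := by
    push_cast
    nlinarith [(by exact_mod_cast hn : (1 : ℝ) ≤ n)]
  refine le_of_mul_le_mul_left ?_ (by positivity : (0 : ℝ) < 2 * N + 1)
  calc (2 * N + 1 : ℝ) * wSum w (Sint m (n * N))
      ≤ C * ((2 * (n * N) + 1 : ℕ) : ℝ) * wSum w (Sint m N) := by exact_mod_cast h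
    _ ≤ C * (n * (2 * N + 1)) * wSum w (Sint m N) := by gcongr
    _ = (2 * N + 1) * (n * C * wSum w (Sint m N)) := by ring

end DiscreteA1Bound

theorem sum_le_of_forall_lt_maxW {w x : ℤ → ℝ} {C t : ℝ} (hw : ∀ k, 0 < w k)
    (hC : DiscreteA1Bound w C) (hC0 : 0 ≤ C) (hx : Summable fun k => |x k| * w k) (ht : 0 < t)
    (F : Finset ℤ) (hF : ∀ m ∈ F, t < maxW w x m) :
    ∑ m ∈ F, w m ≤ (4 * C / t) * ∑' k, |x k| * w k := by
  choose! N hN using fun m (hm : t < maxW w x m) => exists_lt_sum_of_lt_maxW hw hm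
  obtain ⟨G, hGF, hdisj, hcover⟩ := exists_pairwiseDisjoint_Sint_subset_biUnion F N
  have hball : ∀ g ∈ G, 4 * C * wSum w (Sint g (N g)) ≤
      4 * C / t * ∑ k ∈ Sint g (N g), |x k| * w k := by
    intro g hg
    have h := (hN g (hF g (hGF hg))).le
    rw [div_mul_eq_mul_div, mul_div_assoc]
    gcongr
    rwa [le_div_iff₀ ht, mul_comm]
  calc ∑ m ∈ F, w m ≤ ∑ k ∈ G.biUnion (fun g => Sint g (4 * N g)), w k :=
        Finset.sum_le_sum_of_subset_of_nonneg hcover fun k _ _ => (hw k).le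
    _ ≤ ∑ g ∈ G, wSum w (Sint g (4 * N g)) :=
        Finset.sum_biUnion_le_sum_sum (fun k => (hw k).le) _ _
    _ ≤ ∑ g ∈ G, 4 * C * wSum w (Sint g (N g)) := Finset.sum_le_sum fun g _ => by
        exact_mod_cast hC.wSum_Sint_mul_le hC0 (fun k => (hw k).le) (by norm_num : 1 ≤ 4) g (N g)
    _ ≤ ∑ g ∈ G, 4 * C / t * ∑ k ∈ Sint g (N g), |x k| * w k := Finset.sum_le_sum hball
    _ = 4 * C / t * ∑ k ∈ G.biUnion (fun g => Sint g (N g)), |x k| * w k := by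
        rw [Finset.sum_biUnion hdisj, Finset.mul_sum]
    _ ≤ 4 * C / t * ∑' k, |x k| * w k := by
        gcongr
        exact hx.sum_le_tsum _ fun k _ => mul_nonneg (abs_nonneg _) (hw k).le

/-- weak `(1,1)` bound for the discrete weighted maximal operator. -/
theorem stmt13 (w : ℤ → ℝ) (hw : ∀ k, 0 < w k) (hA1 : discreteA1 w) :
    ∃ C > 0, ∀ x : ℤ → ℝ, Summable (fun k : ℤ => |x k| * w k) →
      ∀ t : ℝ, 0 < t →
        ∑' k : {k : ℤ // t < maxW w x k}, w k ≤
          (C / t) * ∑' k : ℤ, |x k| * w k := by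
  obtain ⟨C, hC⟩ := hA1
  have hC1 : 1 ≤ C := DiscreteA1Bound.one_le hC (hw 0)
  refine ⟨4 * C, by positivity, fun x hx t ht => ?_⟩
  have hT : 0 ≤ ∑' k, |x k| * w k := tsum_nonneg fun k => mul_nonneg (abs_nonneg _) (hw k).le
  refine tsum_le_of_sum_le' (by positivity) fun s => ?_
  refine (Finset.sum_map s (Function.Embedding.subtype _) w).symm.trans_le ?_
  refine sum_le_of_forall_lt_maxW hw hC (by positivity) hx ht _ fun m hm => ?_
  obtain ⟨⟨m, hlt⟩, -, rfl⟩ := Finset.mem_map.mp hm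
  exact hlt
end
end

section
/- If 1 < p < ∞, ω ∈ A_p(ℤ), and x ∈ l^p_∞(ω), then the discrete (unweighted) Hardy–Littlewood maximal function Mx is a bounded sequence, with ‖Mx‖_{l^∞} ≤ C‖x‖_{l^p_∞(ω)}. -/
/-!
On a window `S` of `n` points, Hölder's inequality for `|x| = (|x| w^{1/p}) w^{-1/p}` gives
`Σ_S |x| ≤ (Σ_S |x|^p w)^{1/p} (Σ_S w^{-1/(p-1)})^{(p-1)/p}`. The first factor is at most
`w(S)^{1/p} ‖x‖_{l^p_∞(w)}`, and the `p`-th root of the `A_p` condition with constant `C` bounds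
`n⁻¹ w(S)^{1/p} (Σ_S w^{-1/(p-1)})^{(p-1)/p}` by `C^{1/p}`. So every average of `|x|` over a
window is at most `C^{1/p} ‖x‖_{l^p_∞(w)}`.
-/

open Finset MeasureTheory
open scoped Classical

noncomputable section

/-- Discrete weighted Morrey norm with `q = ∞`. -/
def morreyInfNorm (p : ℝ) (w : ℤ → ℝ) (x : ℤ → ℝ) : ℝ :=
  ⨆ mN : ℤ × ℕ, (wSum w (Sint mN.1 mN.2)) ^ (-(1/p)) *
    (∑ k ∈ Sint mN.1 mN.2, |x k| ^ p * w k) ^ (1/p)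

lemma Sint_nonempty (m : ℤ) (N : ℕ) : (Sint m N).Nonempty :=
  Finset.nonempty_Icc.mpr (by omega)

lemma sum_abs_le_weighted_Lp_mul_Lq {ι : Type*} (s : Finset ι) {p : ℝ} (hp : 1 < p)
    (x w : ι → ℝ) (hw : ∀ k ∈ s, 0 < w k) :
    ∑ k ∈ s, |x k| ≤ (∑ k ∈ s, |x k| ^ p * w k) ^ (1 / p) *
      (∑ k ∈ s, w k ^ (-(p - 1)⁻¹)) ^ ((p - 1) / p) := by
  have hp0 : 0 < p := one_pos.trans hp
  have hpq : p.HolderConjugate (p / (p - 1)) := .conjExponent hp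
  have hsplit : ∀ k ∈ s, |x k| = (|x k| * w k ^ (1 / p)) * w k ^ (-(1 / p)) := fun k hk => by
    rw [mul_assoc, ← Real.rpow_add (hw k hk), add_neg_cancel, Real.rpow_zero, mul_one]
  rw [sum_congr rfl hsplit]
  refine (Real.inner_le_Lp_mul_Lq_of_nonneg s hpq
    (fun k hk => mul_nonneg (abs_nonneg _) (Real.rpow_nonneg (hw k hk).le _))
    (fun k hk => Real.rpow_nonneg (hw k hk).le _)).trans_eq ?_
  congr 2
  · refine sum_congr rfl fun k hk => ?_
    rw [Real.mul_rpow (abs_nonneg _) (Real.rpow_nonneg (hw k hk).le _),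
      ← Real.rpow_mul (hw k hk).le, one_div_mul_cancel hp0.ne', Real.rpow_one]
  · refine sum_congr rfl fun k hk => ?_
    rw [← Real.rpow_mul (hw k hk).le]
    congr 1
    field_simp
  · rw [one_div_div]

lemma mul_rpow_mul_rpow_le_of_le {a W σ C p : ℝ} (ha : 0 ≤ a) (hW : 0 ≤ W) (hσ : 0 ≤ σ)
    (hp : 0 < p) (h : a * W * (a * σ) ^ (p - 1) ≤ C) :
    a * (W ^ (1 / p) * σ ^ ((p - 1) / p)) ≤ C ^ (1 / p) := by
  have hexp : 1 / p + (p - 1) / p = 1 := by rw [← add_div, add_sub_cancel, div_self hp.ne']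
  have hsplit : a ^ (1 / p) * a ^ ((p - 1) / p) = a := by
    rw [← Real.rpow_add' ha (by rw [hexp]; exact one_ne_zero), hexp, Real.rpow_one]
  calc a * (W ^ (1 / p) * σ ^ ((p - 1) / p))
      = (a ^ (1 / p) * a ^ ((p - 1) / p)) * (W ^ (1 / p) * σ ^ ((p - 1) / p)) := by rw [hsplit]
    _ = (a * W * (a * σ) ^ (p - 1)) ^ (1 / p) := by
        rw [Real.mul_rpow (by positivity) (by positivity), Real.mul_rpow ha hW,
          ← Real.rpow_mul (by positivity), Real.mul_rpow ha hσ, mul_one_div]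
        ring
    _ ≤ C ^ (1 / p) := Real.rpow_le_rpow (by positivity) h (by positivity)

lemma card_inv_mul_sum_abs_le {ι : Type*} (s : Finset ι) (hs : s.Nonempty) {p C : ℝ}
    (hp : 1 < p) {w : ι → ℝ} (hw : ∀ k ∈ s, 0 < w k)
    (hC : ((s.card : ℝ)⁻¹ * ∑ k ∈ s, w k) *
      ((s.card : ℝ)⁻¹ * ∑ k ∈ s, w k ^ (-(p - 1)⁻¹)) ^ (p - 1) ≤ C) (x : ι → ℝ) :
    (s.card : ℝ)⁻¹ * ∑ k ∈ s, |x k| ≤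
      C ^ (1 / p) *
        ((∑ k ∈ s, w k) ^ (-(1 / p)) * (∑ k ∈ s, |x k| ^ p * w k) ^ (1 / p)) := by
  set W := ∑ k ∈ s, w k
  set σ := ∑ k ∈ s, w k ^ (-(p - 1)⁻¹)
  set A := ∑ k ∈ s, |x k| ^ p * w k
  have hW : 0 < W := sum_pos hw hs
  have hσ : 0 ≤ σ := sum_nonneg fun k hk => Real.rpow_nonneg (hw k hk).le _
  have hA : 0 ≤ A := sum_nonneg fun k hk =>
    mul_nonneg (Real.rpow_nonneg (abs_nonneg _) _) (hw k hk).le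
  have hW_cancel : W ^ (1 / p) * W ^ (-(1 / p)) = 1 := by
    rw [← Real.rpow_add hW, add_neg_cancel, Real.rpow_zero]
  calc (s.card : ℝ)⁻¹ * ∑ k ∈ s, |x k|
      ≤ (s.card : ℝ)⁻¹ * (A ^ (1 / p) * σ ^ ((p - 1) / p)) :=
        mul_le_mul_of_nonneg_left (sum_abs_le_weighted_Lp_mul_Lq s hp x w hw) (by positivity)
    _ = (s.card : ℝ)⁻¹ * (W ^ (1 / p) * σ ^ ((p - 1) / p)) *
          (W ^ (-(1 / p)) * A ^ (1 / p)) := by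
        linear_combination (-(s.card : ℝ)⁻¹ * A ^ (1 / p) * σ ^ ((p - 1) / p)) * hW_cancel
    _ ≤ C ^ (1 / p) * (W ^ (-(1 / p)) * A ^ (1 / p)) :=
        mul_le_mul_of_nonneg_right
          (mul_rpow_mul_rpow_le_of_le (by positivity) hW.le hσ (by linarith) hC)
          (by positivity)

/-- `(l^p_∞(w), l^∞)`-boundedness of the discrete maximal operator. -/
theorem stmt15 (p : ℝ) (hp : 1 < p) (w : ℤ → ℝ) (hw : ∀ k, 0 < w k)
    (hAp : discreteAp p w) :
    ∃ C > 0, ∀ x : ℤ → ℝ,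
      BddAbove (Set.range fun mN : ℤ × ℕ =>
        (wSum w (Sint mN.1 mN.2)) ^ (-(1/p)) *
          (∑ k ∈ Sint mN.1 mN.2, |x k| ^ p * w k) ^ (1/p)) →
      ∀ m : ℤ, maxHL x m ≤ C * morreyInfNorm p w x := by
  obtain ⟨C, hC⟩ := hAp
  have hC_pos : 0 < C := by
    have h := hC 0 0 le_rfl
    simp only [Icc_self, card_singleton, Nat.cast_one, inv_one, sum_singleton, one_mul] at h
    exact (mul_pos (hw 0) (Real.rpow_pos_of_pos (Real.rpow_pos_of_pos (hw 0) _) _)).trans_le h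
  refine ⟨C ^ (1 / p), by positivity, fun x hbdd m => ciSup_le fun N => ?_⟩
  calc ((2 * N + 1 : ℕ) : ℝ)⁻¹ * ∑ k ∈ Sint m N, |x k|
      ≤ C ^ (1 / p) * ((wSum w (Sint m N)) ^ (-(1 / p)) *
          (∑ k ∈ Sint m N, |x k| ^ p * w k) ^ (1 / p)) := by
        rw [← card_Sint m N]
        exact card_inv_mul_sum_abs_le _ (Sint_nonempty m N) hp (fun k _ => hw k)
          (hC _ _ (by omega)) x
    _ ≤ C ^ (1 / p) * morreyInfNorm p w x :=
        mul_le_mul_of_nonneg_left (le_ciSup hbdd (m, N)) (by positivity)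
end
end
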